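/- arXiv:2408.00277 — 2 statements merged into one kernel-verified Lean document; each statement's English description precedes it below -/
import Mathlib

section
/- The exit time of simple random walk from a symmetric interval is stochastically maximized by the unbiased walk: for every p ∈ (0,1), every positive integer k, and every n ∈ ℕ, ℙ(σ_p^k > n) ≤ ℙ(σ_{1/2}^k > n), where σ_p^k is the exit time of the biased random walk with up-step probability p from (-k, k). -/
open MeasureTheory ProbabilityTheory

/-- The partial-sum (random walk) process associated to a step process `X`. -/
noncomputable def walk {Ω : Type*} (X : ℕ → Ω → ℤ) (n : ℕ) (ω : Ω) : ℤ :=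
  ∑ j ∈ Finset.range n, X j ω

/-- The exit time `σ = inf {n : S_n = ±k}` of the walk from `(-k, k)`, valued in `ℕ∞`
(with `inf ∅ = ⊤`). -/
noncomputable def exitTime {Ω : Type*} (X : ℕ → Ω → ℤ) (k : ℕ) (ω : Ω) : ℕ∞ :=
  sInf {t : ℕ∞ | ∃ m : ℕ, t = (m : ℕ∞) ∧ (walk X m ω = (k : ℤ) ∨ walk X m ω = -(k : ℤ))}

/-- `X` is a sequence of i.i.d. `±1`-valued steps with `P(X_i = 1) = p` and
`P(X_i = -1) = 1 - p`. -/
def IsBiasedWalkSteps {Ω : Type*} [MeasurableSpace Ω] (P : Measure Ω)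
    (X : ℕ → Ω → ℤ) (p : ℝ) : Prop :=
  (∀ i, Measurable (X i)) ∧
  iIndepFun X P ∧
  (∀ i, P {ω | X i ω = 1} = ENNReal.ofReal p) ∧
  (∀ i, P {ω | X i ω = -1} = ENNReal.ofReal (1 - p))

/-!
Let `u_n^p(x)` be the probability that the walk started at `x` stays in `(-k, k)` for `n` steps.
Independence of the first step from the later ones gives the first-step recursion
`survivalProb`. By the symmetry `p ↔ 1 - p` we may assume `p ≥ 1/2`; the drift to the right then
makes every `y ≥ 0` a worse starting point than `-y`. For an even weight `w` decreasing away
from `0`, writing one step of the killed walk on the weight side gives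
`∑ w u_{n+1}^p = ∑ w' u_n^p + (p - 1/2) ∑ (v (y - 1) - v (y + 1)) u_n^p(y)`, where `v` is `w`
killed outside `(-k, k)` and `w'` the average of its two shifts. Pairing `y` with `-y` shows that
the correction is `≤ 0`, and `w'` is again even and decreasing, so induction on `n` gives
`∑ w u_n^p ≤ ∑ w u_n^{1/2}`; the weight `w = δ₀` is the claim.
-/

namespace SimpleRandomWalk

open Finset

variable {Ω : Type*} {k : ℕ} {p : ℝ}

noncomputable def survivalProb (k : ℕ) (p : ℝ) : ℕ → ℤ → ℝ
  | 0, x => if x ∈ Set.Ioo (-(k : ℤ)) k then 1 else 0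
  | n + 1, x => if x ∈ Set.Ioo (-(k : ℤ)) k then
      p * survivalProb k p n (x + 1) + (1 - p) * survivalProb k p n (x - 1) else 0

lemma survivalProb_of_notMem {n : ℕ} {x : ℤ} (hx : x ∉ Set.Ioo (-(k : ℤ)) k) :
    survivalProb k p n x = 0 := by
  cases n <;> simp [survivalProb, hx]

lemma survivalProb_succ_of_mem {n : ℕ} {x : ℤ} (hx : x ∈ Set.Ioo (-(k : ℤ)) k) :
    survivalProb k p (n + 1) x =
      p * survivalProb k p n (x + 1) + (1 - p) * survivalProb k p n (x - 1) :=
  if_pos hx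

lemma survivalProb_nonneg (hp0 : 0 ≤ p) (hp1 : p ≤ 1) (n : ℕ) (x : ℤ) :
    0 ≤ survivalProb k p n x := by
  induction n generalizing x with
  | zero => unfold survivalProb; split_ifs <;> norm_num
  | succ n ih =>
    unfold survivalProb
    split_ifs
    · exact add_nonneg (mul_nonneg hp0 (ih _)) (mul_nonneg (sub_nonneg.2 hp1) (ih _))
    · exact le_rfl

lemma survivalProb_neg (n : ℕ) (x : ℤ) :
    survivalProb k p n (-x) = survivalProb k (1 - p) n x := by
  have hmem : ∀ x : ℤ, -x ∈ Set.Ioo (-(k : ℤ)) k ↔ x ∈ Set.Ioo (-(k : ℤ)) k := by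
    intro x; simp only [Set.mem_Ioo]; omega
  induction n generalizing x with
  | zero => simp only [survivalProb, hmem]
  | succ n ih =>
    simp only [survivalProb, hmem, show -x + 1 = -(x - 1) by ring,
      show -x - 1 = -(x + 1) by ring, ih, sub_sub_cancel]
    split_ifs
    · ring
    · rfl

lemma survivalProb_add_two_le_and_le_neg (hp : 1 / 2 ≤ p) (hp1 : p ≤ 1) (n : ℕ) :
    (∀ x : ℤ, 0 ≤ x → survivalProb k p n (x + 2) ≤ survivalProb k p n x) ∧
    (∀ y : ℤ, 0 ≤ y → survivalProb k p n y ≤ survivalProb k p n (-y)) := by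
  have hp0 : 0 ≤ p := by linarith
  induction n with
  | zero =>
    refine ⟨fun x hx => ?_, fun y hy => ?_⟩ <;>
      simp only [survivalProb, Set.mem_Ioo] <;> split_ifs <;> first | omega | norm_num
  | succ n ih =>
    obtain ⟨hmono, hrefl⟩ := ih
    refine ⟨fun x hx => ?_, fun y hy => ?_⟩
    · by_cases hx2 : x + 2 ∈ Set.Ioo (-(k : ℤ)) k
      · have hx' : x ∈ Set.Ioo (-(k : ℤ)) k := by simp only [Set.mem_Ioo] at hx2 ⊢; omega
        rw [survivalProb_succ_of_mem hx2, survivalProb_succ_of_mem hx']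
        have h1 := hmono (x + 1) (by omega)
        have h2 : survivalProb k p n (x + 2 - 1) ≤ survivalProb k p n (x - 1) := by
          -- at `x = 0` the monotonicity step needs the reflection bound at `1`,
          -- which is why the two claims are proved together
          rcases hx.eq_or_lt with rfl | hx
          · simpa using hrefl 1 zero_le_one
          · simpa [show x + 2 - 1 = x - 1 + 2 by ring] using hmono (x - 1) (by omega)
        rw [show x + 2 + 1 = x + 1 + 2 by ring]
        gcongr
      · rw [survivalProb_of_notMem hx2]
        exact survivalProb_nonneg hp0 hp1 _ _
    · by_cases hy' : y ∈ Set.Ioo (-(k : ℤ)) k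
      · have hny : -y ∈ Set.Ioo (-(k : ℤ)) k := by simp only [Set.mem_Ioo] at hy' ⊢; omega
        rw [survivalProb_succ_of_mem hy', survivalProb_succ_of_mem hny]
        rcases hy.eq_or_lt with rfl | hy
        · simp
        have h1 := hrefl (y - 1) (by omega)
        have h2 := hrefl (y + 1) (by omega)
        have h3 := hmono (y - 1) (by omega)
        rw [show y - 1 + 2 = y + 1 by ring] at h3
        rw [show -y + 1 = -(y - 1) by ring, show -y - 1 = -(y + 1) by ring]
        nlinarith [mul_nonneg (by linarith : 0 ≤ p - (1 - p)) (sub_nonneg.2 h3)]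
      · have hny : -y ∉ Set.Ioo (-(k : ℤ)) k := by simp only [Set.mem_Ioo] at hy' ⊢; omega
        rw [survivalProb_of_notMem hy', survivalProb_of_notMem hny]

lemma sum_Icc_comp_add_one {M : Type*} [AddCommMonoid M] (g : ℤ → M) {a b : ℤ}
    (ha : g a = 0) (hb : g (b + 1) = 0) :
    ∑ x ∈ Icc a b, g (x + 1) = ∑ x ∈ Icc a b, g x := by
  have hshift : ∑ x ∈ Icc a b, g (x + 1) = ∑ x ∈ Icc (a + 1) (b + 1), g x := by
    rw [← map_add_right_Icc, sum_map]
    rfl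
  have hleft : ∑ x ∈ Icc (a + 1) (b + 1), g x = ∑ x ∈ Icc a (b + 1), g x :=
    sum_subset (Icc_subset_Icc (by omega) le_rfl) fun x hx hx' => by
      rw [show x = a by simp only [mem_Icc] at hx hx'; omega, ha]
  have hright : ∑ x ∈ Icc a b, g x = ∑ x ∈ Icc a (b + 1), g x :=
    sum_subset (Icc_subset_Icc le_rfl (by omega)) fun x hx hx' => by
      rw [show x = b + 1 by simp only [mem_Icc] at hx hx'; omega, hb]
  rw [hshift, hleft, hright]

lemma sum_Icc_neg_comp {M : Type*} [AddCommMonoid M] (g : ℤ → M) (a : ℤ) :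
    ∑ x ∈ Icc (-a) a, g (-x) = ∑ x ∈ Icc (-a) a, g x :=
  sum_nbij' Neg.neg Neg.neg (fun x hx => by simp only [mem_Icc] at hx ⊢; omega)
    (fun x hx => by simp only [mem_Icc] at hx ⊢; omega) (fun x _ => neg_neg x)
    (fun x _ => neg_neg x) (fun x _ => rfl)

lemma sum_mul_nonpos_of_odd {a f : ℤ → ℝ} (ha_odd : ∀ y, a (-y) = -a y)
    (ha : ∀ y, 0 ≤ y → 0 ≤ a y) (hf : ∀ y, 0 ≤ y → f y ≤ f (-y)) (c : ℤ) :
    ∑ y ∈ Icc (-c) c, a y * f y ≤ 0 := by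
  have hpair : ∀ y, a y * f y + a (-y) * f (-y) ≤ 0 := by
    intro y
    rw [ha_odd, neg_mul, ← sub_eq_add_neg, ← mul_sub]
    rcases le_total 0 y with hy | hy
    · exact mul_nonpos_of_nonneg_of_nonpos (ha y hy) (sub_nonpos.2 (hf y hy))
    · have := hf (-y) (neg_nonneg.2 hy)
      rw [neg_neg] at this
      exact mul_nonpos_of_nonpos_of_nonneg (by linarith [ha (-y) (neg_nonneg.2 hy), ha_odd y])
        (sub_nonneg.2 this)
  have := sum_nonpos fun y (_ : y ∈ Icc (-c) c) => hpair y
  rw [sum_add_distrib, sum_Icc_neg_comp (fun y => a y * f y)] at this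
  linarith

structure IsSymmDecreasing (w : ℤ → ℝ) : Prop where
  nonneg : ∀ x, 0 ≤ w x
  even : ∀ x, w (-x) = w x
  add_two_le : ∀ x, 0 ≤ x → w (x + 2) ≤ w x

namespace IsSymmDecreasing

variable {w : ℤ → ℝ}

lemma indicator_Ioo (hw : IsSymmDecreasing w) (c : ℤ) :
    IsSymmDecreasing ((Set.Ioo (-c) c).indicator w) where
  nonneg x := Set.indicator_nonneg (fun x _ => hw.nonneg x) x
  even x := by
    by_cases hx : x ∈ Set.Ioo (-c) c
    · have hx' : -x ∈ Set.Ioo (-c) c := by simp only [Set.mem_Ioo] at hx ⊢; omega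
      rw [Set.indicator_of_mem hx, Set.indicator_of_mem hx', hw.even]
    · have hx' : -x ∉ Set.Ioo (-c) c := by simp only [Set.mem_Ioo] at hx ⊢; omega
      rw [Set.indicator_of_notMem hx, Set.indicator_of_notMem hx']
  add_two_le x hx := by
    by_cases hx2 : x + 2 ∈ Set.Ioo (-c) c
    · have hx' : x ∈ Set.Ioo (-c) c := by simp only [Set.mem_Ioo] at hx2 ⊢; omega
      rw [Set.indicator_of_mem hx2, Set.indicator_of_mem hx']
      exact hw.add_two_le x hx
    · rw [Set.indicator_of_notMem hx2]
      exact Set.indicator_nonneg (fun x _ => hw.nonneg x) x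

lemma sub_neighbors_odd (hw : IsSymmDecreasing w) (y : ℤ) :
    w (-y - 1) - w (-y + 1) = -(w (y - 1) - w (y + 1)) := by
  rw [show -y - 1 = -(y + 1) by ring, show -y + 1 = -(y - 1) by ring, hw.even, hw.even]
  ring

lemma sub_neighbors_nonneg (hw : IsSymmDecreasing w) {y : ℤ} (hy : 0 ≤ y) :
    0 ≤ w (y - 1) - w (y + 1) := by
  rcases hy.eq_or_lt with rfl | hy
  · simpa using (hw.even 1).ge
  · have := hw.add_two_le (y - 1) (by omega)
    rw [show y - 1 + 2 = y + 1 by ring] at this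
    linarith

lemma average_neighbors (hw : IsSymmDecreasing w) :
    IsSymmDecreasing fun x => (w (x - 1) + w (x + 1)) / 2 where
  nonneg x := by have := hw.nonneg (x - 1); have := hw.nonneg (x + 1); positivity
  even x := by
    rw [show -x - 1 = -(x + 1) by ring, show -x + 1 = -(x - 1) by ring, hw.even, hw.even,
      add_comm]
  add_two_le x hx := by
    have h3 := hw.add_two_le (x + 1) (by omega)
    have h1 := hw.sub_neighbors_nonneg hx
    rw [show x + 2 - 1 = x + 1 by ring, show x + 2 + 1 = x + 1 + 2 by ring]
    linarith

end IsSymmDecreasing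

lemma sum_mul_survivalProb_succ (w : ℤ → ℝ) (p : ℝ) (n : ℕ) :
    ∑ x ∈ Icc (-(k : ℤ)) k, w x * survivalProb k p (n + 1) x =
      ∑ y ∈ Icc (-(k : ℤ)) k, (p * (Set.Ioo (-(k : ℤ)) k).indicator w (y - 1) +
        (1 - p) * (Set.Ioo (-(k : ℤ)) k).indicator w (y + 1)) * survivalProb k p n y := by
  set v := (Set.Ioo (-(k : ℤ)) k).indicator w
  have hv : ∀ x, x ∉ Set.Ioo (-(k : ℤ)) k → v x = 0 :=
    fun x hx => Set.indicator_of_notMem hx w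
  have hf : ∀ x, x ∉ Set.Ioo (-(k : ℤ)) k → survivalProb k p n x = 0 :=
    fun x hx => survivalProb_of_notMem hx
  have hout : ∀ x : ℤ, x ≤ -k ∨ k ≤ x → x ∉ Set.Ioo (-(k : ℤ)) k := by
    intro x hx; simp only [Set.mem_Ioo]; omega
  have hstep : ∀ x, w x * survivalProb k p (n + 1) x =
      p * (v x * survivalProb k p n (x + 1)) +
        (1 - p) * (v x * survivalProb k p n (x - 1)) := by
    intro x
    by_cases hx : x ∈ Set.Ioo (-(k : ℤ)) k
    · rw [survivalProb_succ_of_mem hx, show v x = w x from Set.indicator_of_mem hx w]; ring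
    · rw [survivalProb_of_notMem hx, hv x hx]; ring
  have hup : ∑ x ∈ Icc (-(k : ℤ)) k, v x * survivalProb k p n (x + 1) =
      ∑ y ∈ Icc (-(k : ℤ)) k, v (y - 1) * survivalProb k p n y := by
    simpa using sum_Icc_comp_add_one (fun y => v (y - 1) * survivalProb k p n y)
      (by rw [hf _ (hout _ (by omega)), mul_zero]) (by rw [hf _ (hout _ (by omega)), mul_zero])
  have hdown : ∑ x ∈ Icc (-(k : ℤ)) k, v x * survivalProb k p n (x - 1) =
      ∑ y ∈ Icc (-(k : ℤ)) k, v (y + 1) * survivalProb k p n y := by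
    have hshift := sum_Icc_comp_add_one (fun x => v x * survivalProb k p n (x - 1))
      (a := -k) (b := k) (by rw [hv _ (hout _ (by omega)), zero_mul])
      (by rw [hv _ (hout _ (by omega)), zero_mul])
    simpa using hshift.symm
  rw [sum_congr rfl fun x _ => hstep x, sum_add_distrib, ← mul_sum, ← mul_sum, hup, hdown,
    mul_sum, mul_sum, ← sum_add_distrib]
  exact sum_congr rfl fun y _ => by ring

theorem sum_mul_survivalProb_le_half (hp : 1 / 2 ≤ p) (hp1 : p ≤ 1) (n : ℕ) {w : ℤ → ℝ}
    (hw : IsSymmDecreasing w) :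
    ∑ x ∈ Icc (-(k : ℤ)) k, w x * survivalProb k p n x ≤
      ∑ x ∈ Icc (-(k : ℤ)) k, w x * survivalProb k (1 / 2) n x := by
  induction n generalizing w with
  | zero => rfl
  | succ n ih =>
    set v := (Set.Ioo (-(k : ℤ)) k).indicator w
    have hv : IsSymmDecreasing v := hw.indicator_Ioo k
    have hdrift :
        ∑ y ∈ Icc (-(k : ℤ)) k, (v (y - 1) - v (y + 1)) * survivalProb k p n y ≤ 0 :=
      sum_mul_nonpos_of_odd hv.sub_neighbors_odd (fun y hy => hv.sub_neighbors_nonneg hy)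
        (survivalProb_add_two_le_and_le_neg hp hp1 n).2 k
    rw [sum_mul_survivalProb_succ, sum_mul_survivalProb_succ]
    calc ∑ y ∈ Icc (-(k : ℤ)) k, (p * v (y - 1) + (1 - p) * v (y + 1)) * survivalProb k p n y
        = ∑ y ∈ Icc (-(k : ℤ)) k, (v (y - 1) + v (y + 1)) / 2 * survivalProb k p n y +
            (p - 1 / 2) *
              ∑ y ∈ Icc (-(k : ℤ)) k, (v (y - 1) - v (y + 1)) * survivalProb k p n y := by
          rw [mul_sum, ← sum_add_distrib]
          exact sum_congr rfl fun y _ => by ring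
      _ ≤ ∑ y ∈ Icc (-(k : ℤ)) k, (v (y - 1) + v (y + 1)) / 2 * survivalProb k p n y :=
          add_le_of_nonpos_right (mul_nonpos_of_nonneg_of_nonpos (by linarith) hdrift)
      _ ≤ ∑ y ∈ Icc (-(k : ℤ)) k,
            (v (y - 1) + v (y + 1)) / 2 * survivalProb k (1 / 2) n y :=
          ih hv.average_neighbors
      _ = ∑ y ∈ Icc (-(k : ℤ)) k,
            (1 / 2 * v (y - 1) + (1 - 1 / 2) * v (y + 1)) * survivalProb k (1 / 2) n y :=
          sum_congr rfl fun y _ => by ring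

theorem survivalProb_zero_le_half (hp0 : 0 ≤ p) (hp1 : p ≤ 1) (n : ℕ) :
    survivalProb k p n 0 ≤ survivalProb k (1 / 2) n 0 := by
  wlog hp : 1 / 2 ≤ p generalizing p
  · have := this (p := 1 - p) (by linarith) (by linarith) (by linarith)
    rwa [← survivalProb_neg, neg_zero] at this
  have hδ : IsSymmDecreasing fun x : ℤ => if x = 0 then (1 : ℝ) else 0 :=
    { nonneg := fun x => by positivity
      even := fun x => by simp only [neg_eq_zero]
      add_two_le := fun x hx => by split_ifs <;> first | omega | norm_num }
  simpa [ite_mul] using sum_mul_survivalProb_le_half hp hp1 n hδ (k := k)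

def survivalEvent (X : ℕ → Ω → ℤ) (k n : ℕ) (x : ℤ) : Set Ω :=
  {ω | ∀ j ≤ n, x + walk X j ω ≠ k ∧ x + walk X j ω ≠ -k}

lemma setOf_lt_exitTime (X : ℕ → Ω → ℤ) (k n : ℕ) :
    {ω | (n : ℕ∞) < exitTime X k ω} = survivalEvent X k n 0 := by
  ext ω
  simp only [Set.mem_ofPred_eq, survivalEvent, zero_add, exitTime,
    ← ENat.natCast_add_one_le_iff, le_sInf_iff]
  constructor
  · intro h j hj
    by_contra hhit
    have hle : ((n + 1 : ℕ) : ℕ∞) ≤ j := h j ⟨j, rfl, by tauto⟩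
    norm_cast at hle
    omega
  · rintro h _ ⟨j, rfl, hhit⟩
    have hle : n + 1 ≤ j := by
      by_contra hlt
      have := h j (by omega)
      tauto
    exact_mod_cast hle

lemma walk_succ' (X : ℕ → Ω → ℤ) (j : ℕ) (ω : Ω) :
    walk X (j + 1) ω = X 0 ω + walk (fun i => X (i + 1)) j ω := by
  simp only [walk, Finset.sum_range_succ', add_comm]

lemma survivalEvent_succ_inter {X : ℕ → Ω → ℤ} {n : ℕ} {x : ℤ} (hx : x ≠ k ∧ x ≠ -k)
    (v : ℤ) :
    survivalEvent X k (n + 1) x ∩ {ω | X 0 ω = v} =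
      {ω | X 0 ω = v} ∩ survivalEvent (fun i => X (i + 1)) k n (x + v) := by
  ext ω
  simp only [survivalEvent, Set.mem_inter_iff, Set.mem_ofPred_eq]
  constructor
  · rintro ⟨h, rfl⟩
    refine ⟨rfl, fun j hj => ?_⟩
    simpa only [walk_succ', add_assoc] using h (j + 1) (by omega)
  · rintro ⟨rfl, h⟩
    refine ⟨fun j hj => ?_, rfl⟩
    cases j with
    | zero => simpa [walk] using hx
    | succ j => simpa only [walk_succ', add_assoc] using h j (by omega)

lemma measurableSet_survivalEvent {m : MeasurableSpace Ω} {X : ℕ → Ω → ℤ}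
    (hX : ∀ i, Measurable (X i)) (k n : ℕ) (x : ℤ) :
    MeasurableSet (survivalEvent X k n x) := by
  have hwalk : ∀ j, Measurable (walk X j) := fun j => Finset.measurable_sum _ fun i _ => hX i
  simp only [survivalEvent, Set.ofPred_forall]
  exact .iInter fun j => .iInter fun _ =>
    hwalk j (.of_discrete (s := {z | x + z ≠ k ∧ x + z ≠ -k}))

end SimpleRandomWalk

namespace IsBiasedWalkSteps

open SimpleRandomWalk

variable {Ω : Type*} [MeasurableSpace Ω] {P : Measure Ω} {X : ℕ → Ω → ℤ} {p : ℝ}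
  {k : ℕ}

lemma shift (hX : IsBiasedWalkSteps P X p) : IsBiasedWalkSteps P (fun i => X (i + 1)) p :=
  ⟨fun i => hX.1 (i + 1), hX.2.1.precomp (add_left_injective 1), fun i => hX.2.2.1 (i + 1),
    fun i => hX.2.2.2 (i + 1)⟩

lemma measure_compl_eq_one_or_neg_one [IsProbabilityMeasure P] (hX : IsBiasedWalkSteps P X p)
    (hp0 : 0 ≤ p) (hp1 : p ≤ 1) (i : ℕ) : P {ω | X i ω = 1 ∨ X i ω = -1}ᶜ = 0 := by
  have hmeas : ∀ v : ℤ, MeasurableSet {ω | X i ω = v} :=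
    fun v => hX.1 i (measurableSet_singleton v)
  rw [Set.ofPred_or, prob_compl_eq_zero_iff ((hmeas 1).union (hmeas (-1))),
    measure_union (Set.disjoint_left.2 fun ω h1 h2 => by simp_all) (hmeas (-1)), hX.2.2.1,
    hX.2.2.2, ← ENNReal.ofReal_add hp0 (sub_nonneg.2 hp1), add_sub_cancel, ENNReal.ofReal_one]

lemma measure_inter_tail (hX : IsBiasedWalkSteps P X p) (v : ℤ) {B : Set Ω}
    (hB : MeasurableSet[⨆ i, MeasurableSpace.comap (X (i + 1)) inferInstance] B) :
    P ({ω | X 0 ω = v} ∩ B) = P {ω | X 0 ω = v} * P B := by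
  have hindep := indep_iSup_of_disjoint (fun i => (hX.1 i).comap_le)
    ((iIndepFun_iff_iIndep _ X P).1 hX.2.1) (S := {0}) (T := Set.Ioi 0) (by simp)
  refine (Indep_iff _ _ _).1 hindep _ _ ?_ ?_
  · exact le_iSup₂ (f := fun i (_ : i ∈ ({0} : Set ℕ)) =>
      MeasurableSpace.comap (X i) inferInstance) 0 rfl _ ⟨{v}, trivial, rfl⟩
  · exact iSup_le (fun j => le_iSup₂ (f := fun i (_ : i ∈ Set.Ioi 0) =>
      MeasurableSpace.comap (X i) inferInstance) (j + 1) j.succ_pos) _ hB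

lemma measure_survivalEvent_succ [IsProbabilityMeasure P] (hX : IsBiasedWalkSteps P X p)
    (hp0 : 0 ≤ p) (hp1 : p ≤ 1) {n : ℕ} {x : ℤ} (hx : x ≠ k ∧ x ≠ -k) :
    P (survivalEvent X k (n + 1) x) =
      ENNReal.ofReal p * P (survivalEvent (fun i => X (i + 1)) k n (x + 1)) +
        ENNReal.ofReal (1 - p) * P (survivalEvent (fun i => X (i + 1)) k n (x - 1)) := by
  set X' : ℕ → Ω → ℤ := fun i => X (i + 1)
  have hstep : ∀ v : ℤ, MeasurableSet {ω | X 0 ω = v} :=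
    fun v => hX.1 0 (measurableSet_singleton v)
  have htail : ∀ y : ℤ, MeasurableSet[⨆ i, MeasurableSpace.comap (X' i) inferInstance]
      (survivalEvent X' k n y) := fun y =>
    measurableSet_survivalEvent (fun i => measurable_iff_comap_le.2
      (le_iSup (fun i => MeasurableSpace.comap (X' i) inferInstance) i)) k n y
  calc P (survivalEvent X k (n + 1) x)
      = P (survivalEvent X k (n + 1) x ∩ {ω | X 0 ω = 1 ∨ X 0 ω = -1}) :=
        (measure_inter_conull (hX.measure_compl_eq_one_or_neg_one hp0 hp1 0)).symm
    _ = P ({ω | X 0 ω = 1} ∩ survivalEvent X' k n (x + 1) ∪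
          {ω | X 0 ω = -1} ∩ survivalEvent X' k n (x - 1)) := by
        rw [Set.ofPred_or, Set.inter_union_distrib_left, survivalEvent_succ_inter hx,
          survivalEvent_succ_inter hx, ← sub_eq_add_neg]
    _ = P {ω | X 0 ω = 1} * P (survivalEvent X' k n (x + 1)) +
          P {ω | X 0 ω = -1} * P (survivalEvent X' k n (x - 1)) := by
        rw [measure_union (Set.disjoint_left.2 fun ω h1 h2 => by simp_all)
            ((hstep _).inter (measurableSet_survivalEvent (fun i => hX.1 (i + 1)) k n _)),
          hX.measure_inter_tail _ (htail _), hX.measure_inter_tail _ (htail _)]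
    _ = _ := by rw [hX.2.2.1 0, hX.2.2.2 0]

theorem measure_survivalEvent [IsProbabilityMeasure P] (hX : IsBiasedWalkSteps P X p)
    (hp0 : 0 ≤ p) (hp1 : p ≤ 1) (n : ℕ) {x : ℤ} (hx : x ∈ Set.Icc (-(k : ℤ)) k) :
    P (survivalEvent X k n x) = ENNReal.ofReal (survivalProb k p n x) := by
  have hmem : ∀ {y : ℤ}, y ∈ Set.Icc (-(k : ℤ)) k →
      (y ∈ Set.Ioo (-(k : ℤ)) k ↔ y ≠ k ∧ y ≠ -k) := by
    intro y hy; simp only [Set.mem_Icc, Set.mem_Ioo] at hy ⊢; omega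
  induction n generalizing X x with
  | zero =>
    by_cases h : x ∈ Set.Ioo (-(k : ℤ)) k
    · simp [survivalEvent, walk, survivalProb, h, (hmem hx).1 h]
    · simp [survivalEvent, walk, survivalProb, h, (hmem hx).not.1 h]
  | succ n ih =>
    by_cases h : x ∈ Set.Ioo (-(k : ℤ)) k
    · have hup : x + 1 ∈ Set.Icc (-(k : ℤ)) k := by
        simp only [Set.mem_Ioo, Set.mem_Icc] at h ⊢; omega
      have hdown : x - 1 ∈ Set.Icc (-(k : ℤ)) k := by
        simp only [Set.mem_Ioo, Set.mem_Icc] at h ⊢; omega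
      have hq : 0 ≤ 1 - p := sub_nonneg.2 hp1
      rw [hX.measure_survivalEvent_succ hp0 hp1 ((hmem hx).1 h), ih hX.shift hup,
        ih hX.shift hdown, survivalProb_succ_of_mem h, ← ENNReal.ofReal_mul hp0, ← ENNReal.ofReal_mul hq,
        ← ENNReal.ofReal_add (mul_nonneg hp0 (survivalProb_nonneg hp0 hp1 _ _))
          (mul_nonneg hq (survivalProb_nonneg hp0 hp1 _ _))]
    · have hempty : survivalEvent X k (n + 1) x = ∅ :=
        Set.eq_empty_of_forall_notMem fun ω hω => (hmem hx).not.1 h (by simpa [walk] using hω 0)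
      rw [hempty, survivalProb_of_notMem h, measure_empty, ENNReal.ofReal_zero]

end IsBiasedWalkSteps

open SimpleRandomWalk in
theorem rw_exit_time_maximized_at_half_general
    {Ω₁ Ω₂ : Type*} [MeasurableSpace Ω₁] [MeasurableSpace Ω₂]
    (P : Measure Ω₁) (Phalf : Measure Ω₂)
    [IsProbabilityMeasure P] [IsProbabilityMeasure Phalf]
    {p : ℝ} (h0 : 0 < p) (h1 : p < 1)
    (X : ℕ → Ω₁ → ℤ) (Y : ℕ → Ω₂ → ℤ)
    (hX : IsBiasedWalkSteps P X p) (hY : IsBiasedWalkSteps Phalf Y (1 / 2))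
    (k : ℕ) (n : ℕ) :
    P {ω | (n : ℕ∞) < exitTime X k ω} ≤ Phalf {ω | (n : ℕ∞) < exitTime Y k ω} := by
  have hstart : (0 : ℤ) ∈ Set.Icc (-(k : ℤ)) k := by simp
  rw [setOf_lt_exitTime, setOf_lt_exitTime, hX.measure_survivalEvent h0.le h1.le n hstart,
    hY.measure_survivalEvent (by norm_num) (by norm_num) n hstart]
  exact ENNReal.ofReal_le_ofReal (survivalProb_zero_le_half h0.le h1.le n)

/-- The exit time of simple random walk from `(-k, k)` is stochastically
maximized by the unbiased walk: for every `p ∈ (0,1)` and every `n`,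
`ℙ(σ_p^k > n) ≤ ℙ(σ_{1/2}^k > n)`. -/
theorem rw_exit_time_maximized_at_half
    {Ω₁ Ω₂ : Type*} [MeasurableSpace Ω₁] [MeasurableSpace Ω₂]
    (P : Measure Ω₁) (Phalf : Measure Ω₂)
    [IsProbabilityMeasure P] [IsProbabilityMeasure Phalf]
    {p : ℝ} (h0 : 0 < p) (h1 : p < 1)
    (X : ℕ → Ω₁ → ℤ) (Y : ℕ → Ω₂ → ℤ)
    (hX : IsBiasedWalkSteps P X p) (hY : IsBiasedWalkSteps Phalf Y (1 / 2))
    (k : ℕ) (hk : 0 < k) (n : ℕ) :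
    P {ω | (n : ℕ∞) < exitTime X k ω} ≤ Phalf {ω | (n : ℕ∞) < exitTime Y k ω} :=
  rw_exit_time_maximized_at_half_general P Phalf h0 h1 X Y hX hY k n
end

section
/- Key exchange identity in the random walk proof: Let 1/2 ≤ p₁ < p₂ < 1 with qᵢ = 1 − pᵢ, set r = √(p₂q₂/(p₁q₁)) ∈ (0,1), fix a positive integer k and let σ = inf{n : S_n = ±k} be the exit time from (−k,k). Then for every n ∈ ℕ, ℚ_{p₂}(σ > n) = ( 𝔼_{p₁}[ r^σ · 1_{σ > n} ] / 𝔼_{p₁}[ r^σ ] ), i.e. ℚ_{p₂}(σ > n) = ( 𝔼_{p₁}[ r^σ | σ > n ] / 𝔼_{p₁}[ r^σ ] ) · ℚ_{p₁}(σ > n), where 𝔼_{p₁} denotes expectation under the law of the biased walk with up-step probability p₁. -/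
open MeasureTheory ProbabilityTheory

/-- The natural filtration `ℱ_n = σ(X_1, …, X_n)` of the steps. -/
def rwFilt {Ω : Type*} (X : ℕ → Ω → ℤ) (n : ℕ) : MeasurableSpace Ω :=
  ⨆ j ∈ Finset.range n, MeasurableSpace.comap (X j) inferInstance

/-! Under `ℚ_p` a path of length `m` with `u` up-steps has probability `p ^ u q ^ (m - u)`.
A path leaving `(-k, k)` at time `m = 2d + k` has `d + k` steps towards the exit side and `d`
away from it, and swapping its up- and down-steps gives a path leaving on the other side. Hence
`ℚ_p(σ = m) = N (pq) ^ d (p ^ k + q ^ k)` with `N` independent of `p`, so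
`ℚ_{p₂}(σ = m) = C r ^ m ℚ_{p₁}(σ = m)` for a constant `C`. Since `σ` is almost surely finite
(each block of `2k` steps is all up with probability `p ^ 2k`), summing over `m > n` and over all
`m` gives `ℚ_{p₂}(σ > n) = C 𝔼_{p₁}[r ^ σ; σ > n]` and `1 = C 𝔼_{p₁}[r ^ σ]`. -/

open Finset

namespace BiasedWalk

@[to_additive]
lemma prod_ite_mem_of_subset {α M : Type*} [CommMonoid M] [DecidableEq α] {s t : Finset α}
    (h : t ⊆ s) (a b : M) : ∏ i ∈ s, (if i ∈ t then a else b) = a ^ #t * b ^ (#s - #t) := by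
  rw [prod_ite, filter_mem_eq_inter, inter_eq_right.2 h, filter_not, filter_mem_eq_inter,
    inter_eq_right.2 h, prod_const, prod_const, card_sdiff_of_subset h]

/-- Position after `i` steps of the `±1` path whose up-steps occur exactly at the times in `U`. -/
def pathPos (U : Finset ℕ) (i : ℕ) : ℤ := ∑ j ∈ range i, if j ∈ U then 1 else -1

def ExitsAt (k m : ℕ) (U : Finset ℕ) : Prop :=
  (∀ i < m, (pathPos U i).natAbs ≠ k) ∧ (pathPos U m).natAbs = k

instance (k m : ℕ) : DecidablePred (ExitsAt k m) := fun _ => inferInstanceAs (Decidable (_ ∧ _))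

def exitPaths (k m : ℕ) : Finset (Finset ℕ) := (range m).powerset.filter (ExitsAt k m)

noncomputable def pathWeight (p : ℝ) (m : ℕ) (U : Finset ℕ) : ℝ := p ^ #U * (1 - p) ^ (m - #U)

noncomputable def exitWeight (p : ℝ) (k m : ℕ) : ℝ := ∑ U ∈ exitPaths k m, pathWeight p m U

variable {k m : ℕ} {U : Finset ℕ}

lemma pathPos_of_subset {i : ℕ} (hU : U ⊆ range i) : pathPos U i = 2 * #U - i := by
  have hle : #U ≤ i := by simpa using card_le_card hU
  rw [pathPos, sum_ite_mem_of_subset hU, card_range, nsmul_eq_mul, nsmul_eq_mul,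
    Nat.cast_sub hle]
  ring

lemma pathPos_sdiff {i : ℕ} (hi : i ≤ m) : pathPos (range m \ U) i = -pathPos U i := by
  rw [pathPos, pathPos, ← sum_neg_distrib]
  refine sum_congr rfl fun j hj => ?_
  have hjm : j ∈ range m := mem_range.2 ((mem_range.1 hj).trans_le hi)
  by_cases hjU : j ∈ U <;> simp [hjU, hjm]

lemma exitsAt_sdiff_iff : ExitsAt k m (range m \ U) ↔ ExitsAt k m U := by
  simp only [ExitsAt, pathPos_sdiff le_rfl, Int.natAbs_neg]
  exact and_congr_left' <| forall₂_congr fun i hi => by rw [pathPos_sdiff hi.le, Int.natAbs_neg]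

lemma sdiff_mem_exitPaths (hU : U ∈ exitPaths k m) : range m \ U ∈ exitPaths k m := by
  simp only [exitPaths, mem_filter, mem_powerset] at hU ⊢
  exact ⟨sdiff_subset, exitsAt_sdiff_iff.2 hU.2⟩

lemma card_of_mem_exitPaths (hU : U ∈ exitPaths k m) :
    m = 2 * ((m - k) / 2) + k ∧ (#U = (m - k) / 2 + k ∧ m - #U = (m - k) / 2 ∨
      #U = (m - k) / 2 ∧ m - #U = (m - k) / 2 + k) := by
  simp only [exitPaths, mem_filter, mem_powerset] at hU
  have hpos := pathPos_of_subset hU.1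
  have hle : #U ≤ m := by simpa using card_le_card hU.1
  have := hU.2.2
  omega

lemma pathWeight_add_pathWeight_sdiff (p : ℝ) (hU : U ∈ exitPaths k m) :
    pathWeight p m U + pathWeight p m (range m \ U) =
      (p * (1 - p)) ^ ((m - k) / 2) * (p ^ k + (1 - p) ^ k) := by
  have hsub : U ⊆ range m := (mem_powerset.1 (mem_filter.1 hU).1)
  have hle : #U ≤ m := by simpa using card_le_card hsub
  rw [pathWeight, pathWeight, card_sdiff_of_subset hsub, card_range, Nat.sub_sub_self hle]
  rcases (card_of_mem_exitPaths hU).2 with ⟨h₁, h₂⟩ | ⟨h₁, h₂⟩ <;> rw [h₂, h₁, mul_pow] <;> ring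

lemma two_mul_exitWeight (p : ℝ) :
    2 * exitWeight p k m =
      #(exitPaths k m) * ((p * (1 - p)) ^ ((m - k) / 2) * (p ^ k + (1 - p) ^ k)) := by
  have hflip : exitWeight p k m = ∑ U ∈ exitPaths k m, pathWeight p m (range m \ U) := by
    have hinv : ∀ U ∈ exitPaths k m, range m \ (range m \ U) = U := fun U hU =>
      Finset.sdiff_sdiff_eq_self (mem_powerset.1 (mem_filter.1 hU).1)
    exact sum_nbij' (range m \ ·) (range m \ ·) (fun U hU => sdiff_mem_exitPaths hU)
      (fun U hU => sdiff_mem_exitPaths hU) hinv hinv (fun U hU => by rw [hinv U hU])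
  rw [two_mul]
  nth_rw 2 [hflip]
  rw [exitWeight, ← sum_add_distrib,
    sum_congr rfl fun U hU => pathWeight_add_pathWeight_sdiff p hU, sum_const, nsmul_eq_mul]

lemma pathWeight_nonneg {p : ℝ} (hp : p ∈ Set.Icc 0 1) (m : ℕ) (U : Finset ℕ) :
    0 ≤ pathWeight p m U :=
  mul_nonneg (pow_nonneg hp.1 _) (pow_nonneg (by linarith [hp.2]) _)

lemma exitWeight_nonneg {p : ℝ} (hp : p ∈ Set.Icc 0 1) (k m : ℕ) : 0 ≤ exitWeight p k m :=
  sum_nonneg fun U _ => pathWeight_nonneg hp m U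

lemma exitWeight_eq_mul_pow {p₁ p₂ r : ℝ} (hp₁ : 0 < p₁) (hp₁' : p₁ < 1) (hr : 0 < r)
    (hr2 : r ^ 2 = p₂ * (1 - p₂) / (p₁ * (1 - p₁))) (k m : ℕ) :
    exitWeight p₂ k m = (p₂ ^ k + (1 - p₂) ^ k) / ((p₁ ^ k + (1 - p₁) ^ k) * r ^ k) *
      (r ^ m * exitWeight p₁ k m) := by
  rcases (exitPaths k m).eq_empty_or_nonempty with h | ⟨U, hU⟩
  · simp [exitWeight, h]
  have hrm : r ^ m = (p₂ * (1 - p₂) / (p₁ * (1 - p₁))) ^ ((m - k) / 2) * r ^ k := by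
    obtain ⟨hm, -⟩ := card_of_mem_exitPaths hU
    rw [hm, pow_add, pow_mul, hr2, ← hm]
  have hw : ∀ p, exitWeight p k m =
      #(exitPaths k m) * ((p * (1 - p)) ^ ((m - k) / 2) * (p ^ k + (1 - p) ^ k)) / 2 := fun p => by
    rw [← two_mul_exitWeight]
    ring
  rw [hw, hw, hrm, div_pow]
  generalize (m - k) / 2 = d
  have hq₁ : 0 < 1 - p₁ := by linarith
  field_simp

section ExitTime

variable {Ω : Type*} {X : ℕ → Ω → ℤ} {k : ℕ} {ω : Ω}

lemma walk_succ (X : ℕ → Ω → ℤ) (n : ℕ) (ω : Ω) : walk X (n + 1) ω = walk X n ω + X n ω :=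
  sum_range_succ _ _

lemma le_exitTime_iff {m : ℕ} :
    (m : ℕ∞) ≤ exitTime X k ω ↔ ∀ i < m, (walk X i ω).natAbs ≠ k := by
  simp only [exitTime, le_sInf_iff, Set.mem_ofPred_eq, forall_exists_index, and_imp]
  constructor
  · intro h i hi hik
    exact absurd (h i i rfl (Int.natAbs_eq_iff.1 hik)) (by exact_mod_cast hi.not_ge)
  · rintro h _ i rfl hik
    by_contra hlt
    exact h i (by exact_mod_cast not_le.1 hlt) (Int.natAbs_eq_iff.2 hik)

lemma lt_exitTime_iff {n : ℕ} :
    (n : ℕ∞) < exitTime X k ω ↔ ∀ i ≤ n, (walk X i ω).natAbs ≠ k := by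
  rw [← ENat.add_one_le_iff (ENat.natCast_ne_top n), ← Nat.cast_add_one, le_exitTime_iff]
  simp only [Nat.lt_succ_iff]

lemma exitTime_eq_iff {m : ℕ} :
    exitTime X k ω = m ↔ (∀ i < m, (walk X i ω).natAbs ≠ k) ∧ (walk X m ω).natAbs = k := by
  rw [le_antisymm_iff, and_comm, le_exitTime_iff, ← not_lt, lt_exitTime_iff]
  refine and_congr_right fun h => ⟨fun h' => ?_, fun h' h'' => h'' m le_rfl h'⟩
  by_contra hm
  exact h' fun i hi => (Nat.lt_or_eq_of_le hi).elim (h i) (· ▸ hm)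

lemma measurable_walk {m : MeasurableSpace Ω} {n : ℕ} (hX : ∀ j < n, Measurable[m] (X j)) :
    Measurable[m] (walk X n) :=
  Finset.measurable_sum _ fun j hj => hX j (mem_range.1 hj)

lemma measurableSet_lt_exitTime {m : MeasurableSpace Ω} {n : ℕ}
    (hX : ∀ j < n, Measurable[m] (X j)) : MeasurableSet[m] {ω | (n : ℕ∞) < exitTime X k ω} := by
  simp only [lt_exitTime_iff, Set.ofPred_forall]
  exact .iInter fun i => .iInter fun hi =>
    measurable_walk (fun j hj => hX j (hj.trans_le hi)) (.of_discrete (s := {z : ℤ | z.natAbs ≠ k}))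

lemma measurable_exitTime [MeasurableSpace Ω] (hX : ∀ j, Measurable (X j)) :
    Measurable (exitTime X k) := by
  refine measurable_to_countable' fun t => ?_
  induction t using ENat.recTopCoe with
  | top =>
    simp only [Set.preimage, Set.mem_singleton_iff, ENat.eq_top_iff_forall_gt, Set.ofPred_forall]
    exact .iInter fun n => measurableSet_lt_exitTime fun j _ => hX j
  | coe m =>
    simp only [Set.preimage, Set.mem_singleton_iff, exitTime_eq_iff, Set.ofPred_and,
      Set.ofPred_forall]
    exact MeasurableSet.inter (.iInter fun i => .iInter fun _ =>
      measurable_walk (fun j _ => hX j) (.of_discrete (s := {z : ℤ | z.natAbs ≠ k})))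
      (measurable_walk (fun j _ => hX j) (.of_discrete (s := {z : ℤ | z.natAbs = k})))

lemma natAbs_walk_lt (hX : ∀ j, (X j ω).natAbs ≤ 1) {n : ℕ}
    (h : ∀ i ≤ n, (walk X i ω).natAbs ≠ k) : (walk X n ω).natAbs < k := by
  induction n with
  | zero => have := h 0 le_rfl; simp only [walk, range_zero, sum_empty] at this ⊢; omega
  | succ n ih =>
    have h₁ := ih fun i hi => h i (by omega)
    have h₂ := h (n + 1) le_rfl
    have h₃ := hX n
    rw [walk_succ] at h₂ ⊢
    omega

lemma exitTime_le_of_forall_eq_one (hX : ∀ j, (X j ω).natAbs ≤ 1) {m : ℕ}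
    (hup : ∀ l < 2 * k, X (m + l) ω = 1) : exitTime X k ω ≤ (m + 2 * k : ℕ) := by
  by_contra h
  rw [not_le, lt_exitTime_iff] at h
  have hm := natAbs_walk_lt (n := m) hX fun i hi => h i (by omega)
  have hclimb : ∀ l ≤ 2 * k, walk X (m + l) ω = walk X m ω + l := by
    intro l hl
    induction l with
    | zero => simp
    | succ l ih =>
      rw [← add_assoc, walk_succ, ih (by omega), hup l (by omega)]
      push_cast
      ring
  have hhit := hclimb (k - walk X m ω).toNat (by omega)
  exact h (m + (k - walk X m ω).toNat) (by omega) (by omega)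

end ExitTime

section Law

variable {Ω : Type*} {X : ℕ → Ω → ℤ} {k m : ℕ} {ω : Ω}

/-- Almost surely equal to the steps of a biased walk, but `±1` everywhere. -/
def unitSteps (X : ℕ → Ω → ℤ) (j : ℕ) (ω : Ω) : ℤ := if X j ω = 1 then 1 else -1

def upSet (X : ℕ → Ω → ℤ) (m : ℕ) (ω : Ω) : Finset ℕ := (range m).filter fun j => X j ω = 1

lemma natAbs_unitSteps_le (j : ℕ) : (unitSteps X j ω).natAbs ≤ 1 := by
  unfold unitSteps; split_ifs <;> simp

lemma measurable_unitSteps {m : MeasurableSpace Ω} {j : ℕ} (h : Measurable[m] (X j)) :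
    Measurable[m] (unitSteps X j) :=
  (Measurable.of_discrete (f := fun z : ℤ => if z = 1 then (1 : ℤ) else -1)).comp h

lemma measurable_biSup_comap {S : Set ℕ} {j : ℕ} (hj : j ∈ S) :
    Measurable[⨆ i ∈ S, MeasurableSpace.comap (X i) inferInstance] (X j) :=
  (comap_measurable (X j)).mono (le_iSup₂_of_le j hj le_rfl) le_rfl

lemma walk_unitSteps {i : ℕ} (hi : i ≤ m) : walk (unitSteps X) i ω = pathPos (upSet X m ω) i :=
  sum_congr rfl fun j hj => by simp [unitSteps, upSet, (mem_range.1 hj).trans_le hi]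

lemma exitTime_unitSteps_eq_iff : exitTime (unitSteps X) k ω = m ↔ upSet X m ω ∈ exitPaths k m := by
  simp only [exitTime_eq_iff, exitPaths, mem_filter, mem_powerset, upSet, filter_subset,
    true_and, ExitsAt]
  rw [walk_unitSteps le_rfl]
  exact and_congr_left' <| forall₂_congr fun i hi => by rw [walk_unitSteps hi.le]; rfl

lemma setOf_upSet_eq {U : Finset ℕ} (hU : U ⊆ range m) :
    {ω | upSet X m ω = U} = ⋂ j ∈ range m, X j ⁻¹' (if j ∈ U then {1} else {1}ᶜ) := by
  ext ω
  simp only [Set.mem_ofPred_eq, Set.mem_iInter, Set.mem_preimage, Finset.ext_iff, upSet,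
    mem_filter, mem_range]
  refine ⟨fun h i hi => ?_, fun h i => ?_⟩
  · split_ifs with hiU
    · exact ((h i).2 hiU).2
    · exact fun h₁ => hiU ((h i).1 ⟨hi, h₁⟩)
  · by_cases hi : i < m
    · have := h i hi
      split_ifs at this with hiU <;> simp_all
    · simpa [hi] using fun hiU => hi (mem_range.1 (hU hiU))

variable [MeasurableSpace Ω] {P : Measure Ω} [IsProbabilityMeasure P] {p : ℝ}

lemma measure_upSet_eq (hX : IsBiasedWalkSteps P X p) (hp : p ∈ Set.Icc 0 1) {U : Finset ℕ}
    (hU : U ⊆ range m) :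
    P {ω | upSet X m ω = U} = ENNReal.ofReal (pathWeight p m U) := by
  have hstep : ∀ j, P (X j ⁻¹' (if j ∈ U then {1} else {1}ᶜ)) =
      ENNReal.ofReal (if j ∈ U then p else 1 - p) := by
    intro j
    split_ifs
    · exact hX.2.2.1 j
    · rw [Set.preimage_compl, prob_compl_eq_one_sub (hX.1 j (.of_discrete)),
        ENNReal.ofReal_sub _ hp.1, ENNReal.ofReal_one]
      exact congrArg (1 - ·) (hX.2.2.1 j)
  rw [setOf_upSet_eq hU, hX.2.1.measure_inter_preimage_eq_mul _ fun _ _ => .of_discrete,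
    prod_congr rfl fun j _ => hstep j, ← ENNReal.ofReal_prod_of_nonneg, prod_ite_mem_of_subset hU,
    card_range, pathWeight]
  exact fun j _ => by split_ifs <;> linarith [hp.1, hp.2]

lemma measure_exitTime_unitSteps_eq (hX : IsBiasedWalkSteps P X p) (hp : p ∈ Set.Icc 0 1) :
    P {ω | exitTime (unitSteps X) k ω = m} = ENNReal.ofReal (exitWeight p k m) := by
  have hpre : {ω | exitTime (unitSteps X) k ω = m} = upSet X m ⁻¹' ↑(exitPaths k m) := by
    ext ω
    exact exitTime_unitSteps_eq_iff
  have hsub : ∀ U ∈ exitPaths k m, U ⊆ range m := fun U hU => mem_powerset.1 (mem_filter.1 hU).1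
  rw [hpre, ← sum_measure_preimage_singleton _ fun U hU => ?_, exitWeight,
    ENNReal.ofReal_sum_of_nonneg fun U _ => pathWeight_nonneg hp m U]
  · exact sum_congr rfl fun U hU => measure_upSet_eq hX hp (hsub U hU)
  · change MeasurableSet {ω | upSet X m ω = U}
    rw [setOf_upSet_eq (hsub U hU)]
    exact .biInter (Set.to_countable _) fun j _ => hX.1 j .of_discrete

lemma ae_exitTime_unitSteps_eq (hX : IsBiasedWalkSteps P X p) (hp : p ∈ Set.Icc 0 1) :
    ∀ᵐ ω ∂P, exitTime (unitSteps X) k ω = exitTime X k ω := by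
  have hpm : ∀ j, ∀ᵐ ω ∂P, X j ω = 1 ∨ X j ω = -1 := by
    intro j
    have hdisj : Disjoint {ω | X j ω = 1} {ω | X j ω = -1} :=
      Set.disjoint_left.2 fun ω h₁ h₂ => by simp_all
    have hmeas₁ : MeasurableSet {ω | X j ω = 1} := hX.1 j (.of_discrete (s := {1}))
    have hmeas : MeasurableSet {ω | X j ω = -1} := hX.1 j (.of_discrete (s := {-1}))
    rw [ae_iff, ← Set.compl_ofPred, Set.ofPred_or, prob_compl_eq_zero_iff (hmeas₁.union hmeas),
      measure_union hdisj hmeas, hX.2.2.1 j, hX.2.2.2 j,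
      ← ENNReal.ofReal_add hp.1 (by linarith [hp.2])]
    simp
  filter_upwards [ae_all_iff.2 hpm] with ω hω
  have hsteps : ∀ j, unitSteps X j ω = X j ω := fun j => by
    rcases hω j with h | h <;> simp [unitSteps, h]
  simp only [exitTime, walk, hsteps]

lemma measure_exitTime_preimage_eq (hX : IsBiasedWalkSteps P X p) (hp : p ∈ Set.Icc 0 1)
    (s : Set ℕ∞) : P (exitTime X k ⁻¹' s) = P (exitTime (unitSteps X) k ⁻¹' s) :=
  measure_congr ((ae_exitTime_unitSteps_eq hX hp).mono fun _ hω => congrArg (· ∈ s) hω.symm)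

lemma measure_exitTime_eq (hX : IsBiasedWalkSteps P X p) (hp : p ∈ Set.Icc 0 1) :
    P {ω | exitTime X k ω = m} = ENNReal.ofReal (exitWeight p k m) :=
  (measure_exitTime_preimage_eq hX hp {(m : ℕ∞)}).trans
    (measure_exitTime_unitSteps_eq hX hp)

end Law

section Finite

variable {Ω : Type*} [MeasurableSpace Ω] {P : Measure Ω} [IsProbabilityMeasure P]
  {X : ℕ → Ω → ℤ} {k : ℕ} {p : ℝ}

/-- The event of surviving up to time `m` and the event that the next `2k` steps all go up are
independent; the latter has probability `p ^ 2k` and forces an exit. -/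
lemma measure_lt_exitTime_add_le (hX : IsBiasedWalkSteps P X p) (m : ℕ) :
    P {ω | ((m + 2 * k : ℕ) : ℕ∞) < exitTime (unitSteps X) k ω} ≤
      P {ω | (m : ℕ∞) < exitTime (unitSteps X) k ω} * (1 - ENNReal.ofReal p ^ (2 * k)) := by
  set A := {ω | (m : ℕ∞) < exitTime (unitSteps X) k ω}
  set B := ⋂ j ∈ Ico m (m + 2 * k), X j ⁻¹' {1}
  have hsub : {ω | ((m + 2 * k : ℕ) : ℕ∞) < exitTime (unitSteps X) k ω} ⊆ A ∩ Bᶜ := by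
    intro ω hω
    refine ⟨show (m : ℕ∞) < _ from (Nat.cast_le.2 (Nat.le_add_right m (2 * k))).trans_lt hω,
      fun hB => (exitTime_le_of_forall_eq_one (fun _ => natAbs_unitSteps_le _)
        fun l hl => ?_).not_gt hω⟩
    have : X (m + l) ω = 1 := Set.mem_iInter₂.1 hB (m + l) (mem_Ico.2 ⟨by omega, by omega⟩)
    simp [unitSteps, this]
  have hA : MeasurableSet[⨆ j ∈ (range m : Set ℕ), MeasurableSpace.comap (X j) inferInstance] A :=
    measurableSet_lt_exitTime fun j hj =>
      measurable_unitSteps (measurable_biSup_comap (by simpa using hj))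
  have hB : MeasurableSet[⨆ j ∈ (Ico m (m + 2 * k) : Set ℕ),
      MeasurableSpace.comap (X j) inferInstance] Bᶜ :=
    .compl (.biInter (Set.to_countable _) fun j hj => measurable_biSup_comap hj .of_discrete)
  have hindep := indep_iSup_of_disjoint (fun j => (hX.1 j).comap_le) hX.2.1.iIndep
    (S := (range m : Set ℕ)) (T := (Ico m (m + 2 * k) : Set ℕ))
    (by rw [range_eq_Ico, disjoint_coe]; exact Ico_disjoint_Ico_consecutive 0 m (m + 2 * k))
  have hPB : P B = ENNReal.ofReal p ^ (2 * k) := by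
    rw [hX.2.1.measure_inter_preimage_eq_mul _ fun _ _ => .of_discrete]
    simp [Set.preimage, hX.2.2.1]
  have hBmeas : MeasurableSet B := .biInter (Set.to_countable _) fun j _ => hX.1 j .of_discrete
  calc _ ≤ P (A ∩ Bᶜ) := measure_mono hsub
    _ = P A * P Bᶜ := (Indep_iff _ _ _).1 hindep _ _ hA hB
    _ = _ := by rw [prob_compl_eq_one_sub hBmeas, hPB]

lemma measure_exitTime_eq_top (hX : IsBiasedWalkSteps P X p) (hp : p ∈ Set.Ioc 0 1) :
    P {ω | exitTime X k ω = ⊤} = 0 := by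
  set c := 1 - ENNReal.ofReal p ^ (2 * k)
  have hc : c < 1 := ENNReal.sub_lt_self ENNReal.one_ne_top one_ne_zero
    (pow_ne_zero _ (ENNReal.ofReal_pos.2 hp.1).ne')
  have hgeom : ∀ j, P {ω | ((2 * k * j : ℕ) : ℕ∞) < exitTime (unitSteps X) k ω} ≤ c ^ j := by
    intro j
    induction j with
    | zero => simpa using prob_le_one
    | succ j ih =>
      rw [mul_add_one, pow_succ]
      exact (measure_lt_exitTime_add_le hX _).trans (mul_le_mul_left ih c)
  refine le_antisymm (ge_of_tendsto' (ENNReal.tendsto_pow_atTop_nhds_zero_of_lt_one hc)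
    fun j => ?_) zero_le
  change P (exitTime X k ⁻¹' {⊤}) ≤ _
  rw [measure_exitTime_preimage_eq hX (Set.Ioc_subset_Icc_self hp)]
  exact (measure_mono fun ω hω => (ENat.natCast_lt_top (2 * k * j)).trans_eq hω.symm).trans
    (hgeom j)

end Finite

section Expectation

variable {Ω : Type*} [MeasurableSpace Ω] {P : Measure Ω} [IsProbabilityMeasure P]
  {X : ℕ → Ω → ℤ} {k : ℕ} {p : ℝ}

lemma integral_comp_exitTime (hX : IsBiasedWalkSteps P X p) (hp : p ∈ Set.Ioc 0 1)
    {F : ℕ∞ → ℝ} {C : ℝ} (hF : ∀ t, |F t| ≤ C) :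
    ∫ ω, F (exitTime X k ω) ∂P = ∑' m : ℕ, exitWeight p k m * F m := by
  have hσ := measurable_exitTime (k := k) hX.1
  have hlaw : ∀ t, (P.map (exitTime X k)).real {t} = (P {ω | exitTime X k ω = t}).toReal :=
    fun t => by rw [measureReal_def, Measure.map_apply hσ .of_discrete]; rfl
  rw [← integral_map hσ.aemeasurable Measurable.of_discrete.aestronglyMeasurable,
    integral_countable (Integrable.of_bound Measurable.of_discrete.aestronglyMeasurable C
      (.of_forall hF)), ← Nat.cast_injective.tsum_eq fun t ht => ?_]
  · refine tsum_congr fun m => ?_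
    rw [smul_eq_mul, hlaw, measure_exitTime_eq hX (Set.Ioc_subset_Icc_self hp),
      ENNReal.toReal_ofReal (exitWeight_nonneg (Set.Ioc_subset_Icc_self hp) k m)]
  · induction t using ENat.recTopCoe with
    | top =>
      refine absurd ?_ ht
      simp [hlaw, measure_exitTime_eq_top hX hp]
    | coe m => exact ⟨m, rfl⟩

lemma setIntegral_lt_exitTime (hX : IsBiasedWalkSteps P X p) (hp : p ∈ Set.Ioc 0 1)
    {F : ℕ∞ → ℝ} {C : ℝ} (hF : ∀ t, |F t| ≤ C) (n : ℕ) :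
    ∫ ω in {ω | (n : ℕ∞) < exitTime X k ω}, F (exitTime X k ω) ∂P =
      ∑' m : ℕ, exitWeight p k m * if n < m then F m else 0 := by
  have hG : ∀ t, |if (n : ℕ∞) < t then F t else 0| ≤ C := fun t => by
    split_ifs
    · exact hF t
    · simpa using (abs_nonneg _).trans (hF t)
  rw [← integral_indicator (measurableSet_lt_exitTime fun j _ => hX.1 j)]
  simp only [Set.indicator, Set.mem_ofPred_eq]
  rw [integral_comp_exitTime hX hp (F := fun t => if (n : ℕ∞) < t then F t else 0) hG]
  simp only [Nat.cast_lt]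

end Expectation

section Exchange

variable {Ω₁ Ω₂ : Type*} [MeasurableSpace Ω₁] [MeasurableSpace Ω₂] {P₁ : Measure Ω₁}
  {P₂ : Measure Ω₂} [IsProbabilityMeasure P₁] [IsProbabilityMeasure P₂] {X₁ : ℕ → Ω₁ → ℤ}
  {X₂ : ℕ → Ω₂ → ℤ} {p₁ p₂ r C : ℝ} {k : ℕ} {F : ℕ∞ → ℝ} {c : ℝ}

lemma abs_pow_toNat_mul_le (hr₀ : 0 ≤ r) (hr₁ : r ≤ 1) (hF : ∀ t, |F t| ≤ c) (t : ℕ∞) :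
    |r ^ t.toNat * F t| ≤ c := by
  rw [abs_mul, abs_of_nonneg (pow_nonneg hr₀ _)]
  exact (mul_le_of_le_one_left (abs_nonneg _) (pow_le_one₀ hr₀ hr₁)).trans (hF t)

lemma integral_exitTime_exchange (hX₁ : IsBiasedWalkSteps P₁ X₁ p₁)
    (hX₂ : IsBiasedWalkSteps P₂ X₂ p₂) (hp₁ : p₁ ∈ Set.Ioc 0 1) (hp₂ : p₂ ∈ Set.Ioc 0 1)
    (hr₀ : 0 ≤ r) (hr₁ : r ≤ 1) (hE : ∀ m, exitWeight p₂ k m = C * (r ^ m * exitWeight p₁ k m))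
    (hF : ∀ t, |F t| ≤ c) :
    ∫ ω, F (exitTime X₂ k ω) ∂P₂ =
      C * ∫ ω, r ^ (exitTime X₁ k ω).toNat * F (exitTime X₁ k ω) ∂P₁ := by
  rw [integral_comp_exitTime hX₂ hp₂ hF, integral_comp_exitTime hX₁ hp₁
    (F := fun t => r ^ t.toNat * F t) (abs_pow_toNat_mul_le hr₀ hr₁ hF), ← tsum_mul_left]
  refine tsum_congr fun m => ?_
  rw [hE m, ENat.toNat_natCast]
  ring

lemma setIntegral_exitTime_exchange (hX₁ : IsBiasedWalkSteps P₁ X₁ p₁)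
    (hX₂ : IsBiasedWalkSteps P₂ X₂ p₂) (hp₁ : p₁ ∈ Set.Ioc 0 1) (hp₂ : p₂ ∈ Set.Ioc 0 1)
    (hr₀ : 0 ≤ r) (hr₁ : r ≤ 1) (hE : ∀ m, exitWeight p₂ k m = C * (r ^ m * exitWeight p₁ k m))
    (hF : ∀ t, |F t| ≤ c) (n : ℕ) :
    ∫ ω in {ω | (n : ℕ∞) < exitTime X₂ k ω}, F (exitTime X₂ k ω) ∂P₂ =
      C * ∫ ω in {ω | (n : ℕ∞) < exitTime X₁ k ω},
        r ^ (exitTime X₁ k ω).toNat * F (exitTime X₁ k ω) ∂P₁ := by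
  rw [setIntegral_lt_exitTime hX₂ hp₂ hF, setIntegral_lt_exitTime hX₁ hp₁
    (F := fun t => r ^ t.toNat * F t) (abs_pow_toNat_mul_le hr₀ hr₁ hF), ← tsum_mul_left]
  refine tsum_congr fun m => ?_
  rw [hE m, ENat.toNat_natCast]
  split_ifs <;> ring

end Exchange

end BiasedWalk

open BiasedWalk

theorem rw_key_exchange_identity_general
    {Ω₁ Ω₂ : Type*} [MeasurableSpace Ω₁] [MeasurableSpace Ω₂]
    (P₁ : Measure Ω₁) (P₂ : Measure Ω₂)
    [IsProbabilityMeasure P₁] [IsProbabilityMeasure P₂]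
    {p₁ p₂ : ℝ} (h₁ : 1 / 2 ≤ p₁) (h₁₂ : p₁ < p₂) (h₂ : p₂ < 1)
    (X₁ : ℕ → Ω₁ → ℤ) (X₂ : ℕ → Ω₂ → ℤ)
    (hX₁ : IsBiasedWalkSteps P₁ X₁ p₁) (hX₂ : IsBiasedWalkSteps P₂ X₂ p₂)
    (k : ℕ) (n : ℕ) :
    (P₂ {ω | (n : ℕ∞) < exitTime X₂ k ω}).toReal =
      (∫ ω in {ω | (n : ℕ∞) < exitTime X₁ k ω},
          Real.sqrt ((p₂ * (1 - p₂)) / (p₁ * (1 - p₁))) ^ (exitTime X₁ k ω).toNat ∂P₁) /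
        ∫ ω, Real.sqrt ((p₂ * (1 - p₂)) / (p₁ * (1 - p₁))) ^ (exitTime X₁ k ω).toNat ∂P₁ := by
  have hp₁ : p₁ ∈ Set.Ioc 0 1 := ⟨by linarith, by linarith⟩
  have hp₂ : p₂ ∈ Set.Ioc 0 1 := ⟨by linarith, h₂.le⟩
  have hρ₀ : 0 < p₂ * (1 - p₂) / (p₁ * (1 - p₁)) := div_pos (by nlinarith) (by nlinarith)
  have hρ₁ : p₂ * (1 - p₂) / (p₁ * (1 - p₁)) ≤ 1 := (div_le_one (by nlinarith)).2 (by nlinarith)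
  set r := √(p₂ * (1 - p₂) / (p₁ * (1 - p₁)))
  have hr₀ : 0 < r := Real.sqrt_pos.2 hρ₀
  have hE := exitWeight_eq_mul_pow hp₁.1 (by linarith) hr₀ (Real.sq_sqrt hρ₀.le) k
  have hD := integral_exitTime_exchange hX₁ hX₂ hp₁ hp₂ hr₀.le (Real.sqrt_le_one.2 hρ₁) hE
    (F := fun _ => 1) (c := 1) (by simp)
  have hN := setIntegral_exitTime_exchange hX₁ hX₂ hp₁ hp₂ hr₀.le (Real.sqrt_le_one.2 hρ₁) hE
    (F := fun _ => 1) (c := 1) (by simp) n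
  simp only [mul_one, integral_const, smul_eq_mul, measureReal_def, Measure.restrict_apply_univ,
    measure_univ, ENNReal.toReal_one] at hD hN
  rw [hN, eq_div_iff (right_ne_zero_of_mul_eq_one hD.symm), mul_right_comm, ← hD, one_mul]

/-- Key exchange identity in the random walk proof: for
`1/2 ≤ p₁ < p₂ < 1`, `r = √(p₂q₂/(p₁q₁))` and every `n`,
`ℚ_{p₂}(σ > n) = 𝔼_{p₁}[r^σ 1_{σ > n}] / 𝔼_{p₁}[r^σ]`. -/
theorem rw_key_exchange_identity
    {Ω₁ Ω₂ : Type*} [MeasurableSpace Ω₁] [MeasurableSpace Ω₂]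
    (P₁ : Measure Ω₁) (P₂ : Measure Ω₂)
    [IsProbabilityMeasure P₁] [IsProbabilityMeasure P₂]
    {p₁ p₂ : ℝ} (h₁ : 1 / 2 ≤ p₁) (h₁₂ : p₁ < p₂) (h₂ : p₂ < 1)
    (X₁ : ℕ → Ω₁ → ℤ) (X₂ : ℕ → Ω₂ → ℤ)
    (hX₁ : IsBiasedWalkSteps P₁ X₁ p₁) (hX₂ : IsBiasedWalkSteps P₂ X₂ p₂)
    (k : ℕ) (hk : 0 < k) (n : ℕ) :
    (P₂ {ω | (n : ℕ∞) < exitTime X₂ k ω}).toReal =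
      (∫ ω in {ω | (n : ℕ∞) < exitTime X₁ k ω},
          Real.sqrt ((p₂ * (1 - p₂)) / (p₁ * (1 - p₁))) ^ (exitTime X₁ k ω).toNat ∂P₁) /
        ∫ ω, Real.sqrt ((p₂ * (1 - p₂)) / (p₁ * (1 - p₁))) ^ (exitTime X₁ k ω).toNat ∂P₁ :=
  rw_key_exchange_identity_general P₁ P₂ h₁ h₁₂ h₂ X₁ X₂ hX₁ hX₂ k n
end
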